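/- arXiv:1911.09563 — 2 statements merged into one kernel-verified Lean document; each statement's English description precedes it below -/
import Mathlib

section
/- Let (β_t^x)_{t≥0} be the aperiodic nearest-neighbors branching random walk on ℤ^d started by a single particle at x, with offspring distribution 𝒫. For every n ≥ 1 and all x, y in the intersection of the positive orthant ℤ₊^d with the interior Λ̊_n^d, if x ⪯ y then τ_n^y ≤_st τ_n^x, i.e. ℙ(τ_n^y > t) ≤ ℙ(τ_n^x > t) for every t. -/
open scoped ENNReal
open MeasureTheory Filter

namespace BRW

/-- Sites of the lattice `ℤ^d`. -/
abbrev Site (d : ℕ) := Fin d → ℤ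

/-- A configuration of particles: finitely many particles, `η z` particles at site `z`. -/
abbrev Config (d : ℕ) := Site d →₀ ℕ

noncomputable instance (d : ℕ) : MeasurableSpace (Config d) := ⊤
noncomputable instance (d : ℕ) : MeasurableSpace (List (Config d)) := ⊤

instance (d : ℕ) : Inhabited (Config d) := ⟨0⟩

/-- Uniform distribution on a finite set (junk value if the set is empty). -/
noncomputable def unifOn {α : Type*} [Inhabited α] (s : Finset α) : PMF α :=
  if h : s.Nonempty then PMF.uniformOfFinset s h else PMF.pure default

/-- Bernoulli distribution (junk value if `p > 1`). -/
noncomputable def bern (p : ℝ≥0∞) : PMF Bool :=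
  if h : p ≤ 1 then PMF.bernoulli p.toNNReal (by simpa using ENNReal.toNNReal_mono ENNReal.one_ne_top h) else PMF.pure true

/-- Convolution of two `PMF`s on an additive monoid: the law of a sum of independent samples. -/
noncomputable def conv {α : Type*} [AddCommMonoid α] (p q : PMF α) : PMF α :=
  p.bind fun a => q.bind fun b => PMF.pure (a + b)

instance {α : Type*} [AddCommMonoid α] : Std.Commutative (conv (α := α)) where
  comm p q := by
    unfold conv
    rw [PMF.bind_comm]
    refine congrArg _ (funext fun b => congrArg _ (funext fun a => ?_))
    rw [add_comm]

instance {α : Type*} [AddCommMonoid α] : Std.Associative (conv (α := α)) where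
  assoc p q r := by
    simp only [conv, PMF.bind_bind, PMF.pure_bind, add_assoc]

/-- `n`-fold convolution: the law of a sum of `n` independent samples of `p`. -/
noncomputable def iterConv {α : Type*} [AddCommMonoid α] (p : PMF α) : ℕ → PMF α
  | 0 => PMF.pure 0
  | n + 1 => conv p (iterConv p n)

variable {d : ℕ}

/-- The nearest neighbors (`L¹`-distance exactly one) of a site. -/
def nbrs (z : Site d) : Finset (Site d) :=
  (Finset.univ ×ˢ ({1, -1} : Finset ℤ)).image fun p => Function.update z p.1 (z p.1 + p.2)

/-- Law of the configuration of children of one particle at `z`: a random number of offspring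
distributed according to `P`, each placed independently and uniformly at random on `nbr z`. -/
noncomputable def childLaw (P : PMF ℕ) (nbr : Site d → Finset (Site d)) (z : Site d) :
    PMF (Config d) :=
  P.bind fun n => iterConv ((unifOn (nbr z)).map fun w => Finsupp.single w 1) n

/-- Children law of the aperiodic walk: offspring are placed uniformly on the `2d+1` sites at
`L¹`-distance at most `1` from the parent. -/
noncomputable def aperiodicChild (P : PMF ℕ) (z : Site d) : PMF (Config d) :=
  childLaw P (fun w => insert w (nbrs w)) z

/-- Children law of the periodic walk: offspring are placed uniformly on the `2d` nearest
neighbors of the parent. -/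
noncomputable def periodicChild (P : PMF ℕ) (z : Site d) : PMF (Config d) :=
  childLaw P nbrs z

/-- Children law of the `π`-survival periodic walk: offspring placed uniformly on the nearest
neighbors, and in addition the particle itself survives with probability `π`, independently. -/
noncomputable def survChild (P : PMF ℕ) (π : ℝ≥0∞) (z : Site d) : PMF (Config d) :=
  conv (periodicChild P z) ((bern π).map fun b => if b then Finsupp.single z 1 else 0)

/-- One-step transition of a branching random walk with given children law: every particle
produces, independently of all other particles, a random children configuration. -/
noncomputable def stepOf (child : Site d → PMF (Config d)) (η : Config d) : PMF (Config d) :=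
  Finset.fold conv (PMF.pure 0) (fun z => iterConv (child z) (η z)) η.support

/-- One-step transition of the aperiodic nearest-neighbors branching random walk. -/
noncomputable def aperiodicStep (P : PMF ℕ) : Config d → PMF (Config d) :=
  stepOf (aperiodicChild P)

/-- One-step transition of the periodic nearest-neighbors branching random walk. -/
noncomputable def periodicStep (P : PMF ℕ) : Config d → PMF (Config d) :=
  stepOf (periodicChild P)

/-- One-step transition of the `π`-survival periodic nearest-neighbors branching random walk. -/
noncomputable def survStep (P : PMF ℕ) (π : ℝ≥0∞) : Config d → PMF (Config d) :=
  stepOf (survChild P π)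

/-- The law of the configuration at time `t` of the Markov chain with one-step transition `step`
started from configuration `init`. -/
noncomputable def timeLaw (step : Config d → PMF (Config d)) (init : Config d) :
    ℕ → PMF (Config d)
  | 0 => PMF.pure init
  | t + 1 => (timeLaw step init t).bind step

/-- The law of the trajectory up to time `t`, recorded as the list `[η_t, η_{t-1}, ..., η_0]`. -/
noncomputable def pathLaw (step : Config d → PMF (Config d)) (init : Config d) :
    ℕ → PMF (List (Config d))
  | 0 => PMF.pure [init]
  | t + 1 => (pathLaw step init t).bind fun l => (step l.headI).map fun c => c :: l

/-- `z ∈ ∂Λ_n`, the boundary of the hypercube `Λ_n = {z : ‖z‖_∞ ≤ n}`. -/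
def onBdry (n : ℕ) (z : Site d) : Prop :=
  (∀ i, |z i| ≤ (n : ℤ)) ∧ ∃ i, |z i| = (n : ℤ)

/-- `z ∈ Λ̊_n`, the interior of the hypercube `Λ_n`. -/
def inInterior (n : ℕ) (z : Site d) : Prop :=
  ∀ i, |z i| < (n : ℤ)

/-- The configuration `η` has no particle on `∂Λ_n`. -/
def avoids (n : ℕ) (η : Config d) : Prop :=
  ∀ z : Site d, onBdry n z → η z = 0

/-- `ℙ(τ_n > t)`: the probability that the branching random walk with one-step transition `step`
started from `init` puts no particle on `∂Λ_n` at any time `0, 1, ..., t`. -/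
noncomputable def survProb (step : Config d → PMF (Config d)) (init : Config d) (n t : ℕ) :
    ℝ≥0∞ :=
  (pathLaw step init t).toMeasure {l | ∀ c ∈ l, avoids n c}

/-- `p_n = ℙ(τ_n < ∞)`: the probability that some particle ever reaches `∂Λ_n`. -/
noncomputable def hitProb (step : Config d → PMF (Config d)) (init : Config d) (n : ℕ) : ℝ≥0∞ :=
  1 - ⨅ t : ℕ, survProb step init n t

/-- `ℙ(X(z) > k)` when the configuration `X` is distributed according to `p`. -/
noncomputable def tailProb (p : PMF (Config d)) (z : Site d) (k : ℕ) : ℝ≥0∞ :=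
  p.toMeasure {η | k < η z}

/-- The hitting time of `∂Λ_n` by a trajectory of configurations, valued in `ℕ ∪ {∞}`. -/
noncomputable def hitTime (n : ℕ) (f : ℕ → Config d) : ℕ∞ :=
  sInf ((fun t : ℕ => (t : ℕ∞)) '' {t | ¬ avoids n (f t)})

/-- The process `X` on the probability space `(Ω, Pr)` is a realization of (i.e., has the law of)
the branching random walk with one-step transition `step` started from `init`: for every `t`, the
trajectory up to time `t` has law `pathLaw step init t`. -/
def HasPathLaw {Ω : Type*} [MeasurableSpace Ω] (Pr : Measure Ω)
    (step : Config d → PMF (Config d)) (init : Config d) (X : ℕ → Ω → Config d) : Prop :=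
  ∀ t : ℕ, Measure.map (fun ω => (List.range (t + 1)).map fun s => X (t - s) ω) Pr
    = (pathLaw step init t).toMeasure

end BRW

/-!
Let `g_t(z)` be the probability that the walk started from one particle at `z` avoids `∂Λ_n` up to
time `t`. Since particles evolve independently, `g_{t+1}(z) = 0` on `∂Λ_n` and otherwise
`g_{t+1}(z) = φ(avg_e g_t(z + e))`, where `φ` is the offspring generating function and `e` runs
over the `2d+1` displacements. By induction on `t`, `g_t(w) ≤ g_t(u)` whenever `|u| ≤ |w|`
coordinatewise inside `Λ_n`. For the inductive step it suffices to change one coordinate `uᵢ` into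
`c` with `|uᵢ| ≤ |c|`; the displacements of the two sites can then be paired so that the paired
sites are again ordered in `|·|`: by the sign flip `eᵢ ↔ -eᵢ` if `|uᵢ| = |c|`, and by a
`3`-cycle through the zero displacement if `|uᵢ| < |c|`. Finally `0 ⪯ x ⪯ y` gives `|x| ≤ |y|`.
-/

namespace PMF

variable {α β : Type*}

noncomputable def expect (p : PMF α) (f : α → ℝ≥0∞) : ℝ≥0∞ := ∑' a, p a * f a

theorem expect_pure (a : α) (f : α → ℝ≥0∞) : (PMF.pure a).expect f = f a := by
  rw [expect, tsum_eq_single a fun b hb => by simp [hb]]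
  simp

theorem expect_bind (p : PMF α) (q : α → PMF β) (f : β → ℝ≥0∞) :
    (p.bind q).expect f = p.expect fun a => (q a).expect f := by
  simp only [expect, bind_apply, ← ENNReal.tsum_mul_right, ← ENNReal.tsum_mul_left, mul_assoc]
  exact ENNReal.tsum_comm

theorem expect_map (p : PMF α) (g : α → β) (f : β → ℝ≥0∞) :
    (p.map g).expect f = p.expect (f ∘ g) := by
  simp only [map, expect_bind, Function.comp_apply, expect_pure]
  rfl

theorem expect_mono {p : PMF α} {f g : α → ℝ≥0∞} (h : f ≤ g) : p.expect f ≤ p.expect g :=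
  ENNReal.tsum_le_tsum fun a => mul_le_mul_right (h a) _

theorem expect_mul_left (p : PMF α) (c : ℝ≥0∞) (f : α → ℝ≥0∞) :
    p.expect (fun a => c * f a) = c * p.expect f := by
  simp only [expect, ← ENNReal.tsum_mul_left, mul_left_comm]

theorem toMeasure_apply_eq_expect [MeasurableSpace α] (p : PMF α) {s : Set α}
    (hs : MeasurableSet s) : p.toMeasure s = p.expect (s.indicator 1) := by
  rw [toMeasure_apply p hs]
  refine tsum_congr fun a => ?_
  by_cases ha : a ∈ s <;> simp [ha]

theorem bind_congr_support (p : PMF α) {q q' : α → PMF β} (h : ∀ a ∈ p.support, q a = q' a) :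
    p.bind q = p.bind q' := by
  ext b
  exact tsum_congr fun a => by
    by_cases ha : a ∈ p.support
    · rw [h a ha]
    · simp [(mem_support_iff p a).not_left.mp ha]

end PMF

namespace BRW

variable {d : ℕ}

section Multiplicative

variable {α β : Type*} [AddCommMonoid α] {f : α → ℝ≥0∞}

theorem expect_conv (hf : ∀ a b, f (a + b) = f a * f b) (p q : PMF α) :
    (conv p q).expect f = p.expect f * q.expect f := by
  simp only [conv, PMF.expect_bind, PMF.expect_pure, hf, PMF.expect_mul_left]
  simp only [PMF.expect, ← ENNReal.tsum_mul_right, mul_assoc]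

theorem expect_iterConv (hf : ∀ a b, f (a + b) = f a * f b) (hf0 : f 0 = 1) (p : PMF α)
    (k : ℕ) : (iterConv p k).expect f = p.expect f ^ k := by
  induction k with
  | zero => simp [iterConv, PMF.expect_pure, hf0]
  | succ k ih => rw [iterConv, expect_conv hf, ih, pow_succ', mul_comm]

theorem expect_fold_conv (hf : ∀ a b, f (a + b) = f a * f b) (hf0 : f 0 = 1) (s : Finset β)
    (g : β → PMF α) : (s.fold conv (PMF.pure 0) g).expect f = ∏ b ∈ s, (g b).expect f := by
  classical
  induction s using Finset.induction_on with
  | empty => simp [PMF.expect_pure, hf0]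
  | insert b s hb ih => rw [Finset.fold_insert hb, expect_conv hf, ih, Finset.prod_insert hb]

end Multiplicative

theorem expect_stepOf {f : Config d → ℝ≥0∞} (hf : ∀ a b, f (a + b) = f a * f b) (hf0 : f 0 = 1)
    (child : Site d → PMF (Config d)) (η : Config d) :
    (stepOf child η).expect f = η.prod fun z k => (child z).expect f ^ k := by
  rw [stepOf, expect_fold_conv hf hf0]
  exact Finset.prod_congr rfl fun z _ => expect_iterConv hf hf0 _ _

theorem stepOf_zero (child : Site d → PMF (Config d)) : stepOf child 0 = PMF.pure 0 := by
  simp [stepOf]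

theorem ne_nil_of_mem_support_pathLaw {step : Config d → PMF (Config d)} {init : Config d}
    {t : ℕ} {l : List (Config d)} (hl : l ∈ (pathLaw step init t).support) : l ≠ [] := by
  cases t with
  | zero => simp_all [pathLaw]
  | succ t =>
    simp only [pathLaw, PMF.support_bind, PMF.support_map, Set.mem_iUnion, Set.mem_image] at hl
    obtain ⟨_, _, c, _, rfl⟩ := hl
    exact List.cons_ne_nil _ _

/-- Markov property at time `1`; trajectories are listed newest first, so the initial
configuration goes at the end. -/
theorem pathLaw_succ_eq_bind_step (step : Config d → PMF (Config d)) (init : Config d) (t : ℕ) :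
    pathLaw step init (t + 1)
      = (step init).bind fun c => (pathLaw step c t).map (· ++ [init]) := by
  induction t generalizing init with
  | zero =>
    simp only [pathLaw, PMF.pure_bind, PMF.pure_map]
    rfl
  | succ t ih =>
    rw [pathLaw, ih, PMF.bind_bind]
    refine congrArg _ (funext fun c => ?_)
    rw [PMF.bind_map, pathLaw, PMF.map_bind]
    refine PMF.bind_congr_support _ fun l hl => ?_
    obtain ⟨a, l', rfl⟩ := List.exists_cons_of_ne_nil (ne_nil_of_mem_support_pathLaw hl)
    simp only [Function.comp_apply, List.cons_append, List.headI_cons, PMF.map_comp]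
    rfl

section Survival

open scoped Classical

theorem survProb_eq_expect (step : Config d → PMF (Config d)) (init : Config d) (n t : ℕ) :
    survProb step init n t
      = (pathLaw step init t).expect ({l | ∀ c ∈ l, avoids n c}.indicator 1) :=
  PMF.toMeasure_apply_eq_expect _ MeasurableSpace.measurableSet_top

theorem survProb_zero (step : Config d → PMF (Config d)) (init : Config d) (n : ℕ) :
    survProb step init n 0 = if avoids n init then 1 else 0 := by
  simp [survProb_eq_expect, pathLaw, PMF.expect_pure, Set.indicator_apply]

theorem survProb_succ (step : Config d → PMF (Config d)) (init : Config d) (n t : ℕ) :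
    survProb step init n (t + 1)
      = if avoids n init then (step init).expect fun c => survProb step c n t else 0 := by
  simp only [survProb_eq_expect, pathLaw_succ_eq_bind_step, PMF.expect_bind, PMF.expect_map]
  split_ifs with h
  · have append_init : ∀ l : List (Config d), {l | ∀ c ∈ l, avoids n c}.indicator 1 (l ++ [init])
        = {l | ∀ c ∈ l, avoids n c}.indicator (1 : List (Config d) → ℝ≥0∞) l := fun l => by
      simp only [Set.indicator_apply, Set.mem_ofPred_eq, List.forall_mem_append,
        List.forall_mem_singleton, h, and_true, Pi.one_apply]
    simp only [Function.comp_def, append_init]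
  · simp [h, PMF.expect]

theorem avoids_zero (n : ℕ) : avoids n (0 : Config d) := fun _ _ => rfl

theorem avoids_add {n : ℕ} {η η' : Config d} :
    avoids n (η + η') ↔ avoids n η ∧ avoids n η' := by
  simp only [avoids, Finsupp.add_apply, Nat.add_eq_zero_iff, ← forall_and]

theorem survProb_stepOf_zero (child : Site d → PMF (Config d)) (n t : ℕ) :
    survProb (stepOf child) 0 n t = 1 := by
  induction t with
  | zero => simp [survProb_zero, avoids_zero]
  | succ t ih => simp [survProb_succ, avoids_zero, stepOf_zero, PMF.expect_pure, ih]

theorem survProb_stepOf_add (child : Site d → PMF (Config d)) (n t : ℕ) (η η' : Config d) :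
    survProb (stepOf child) (η + η') n t
      = survProb (stepOf child) η n t * survProb (stepOf child) η' n t := by
  induction t generalizing η η' with
  | zero => simp only [survProb_zero, ite_zero_mul_ite_zero, mul_one, avoids_add]
  | succ t ih =>
    have hstep := expect_stepOf (f := fun c => survProb (stepOf child) c n t) ih
      (survProb_stepOf_zero child n t) child
    simp only [survProb_succ, ite_zero_mul_ite_zero, avoids_add, hstep,
      Finsupp.prod_add_index' (fun _ => pow_zero _) fun _ _ _ => pow_add _ _ _]

end Survival

abbrev Move (d : ℕ) := Option (Fin d × ℤˣ)

def disp : Move d → Site d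
  | none => 0
  | some (i, s) => Pi.single i (s : ℤ)

theorem disp_injective : Function.Injective (disp (d := d)) := by
  rintro (_ | ⟨i, s⟩) (_ | ⟨j, r⟩) h
  · rfl
  · exact absurd (by simpa [disp] using (congrFun h j).symm) r.ne_zero
  · exact absurd (by simpa [disp] using congrFun h i) s.ne_zero
  · have hi := congrFun h i
    by_cases hij : i = j
    · subst hij
      simp_all [disp, Units.ext_iff]
    · simp [disp, hij] at hi

theorem image_add_disp (z : Site d) :
    Finset.univ.image (fun o : Move d => z + disp o) = insert z (nbrs z) := by
  have update_eq : ∀ i e, Function.update z i (z i + e) = z + Pi.single i e := fun i e => by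
    ext j
    by_cases hj : j = i <;> simp [hj]
  ext w
  simp only [Finset.mem_image, Finset.mem_univ, true_and, Finset.mem_insert, nbrs,
    Finset.mem_product, Finset.mem_singleton, update_eq]
  constructor
  · rintro ⟨_ | ⟨i, s⟩, rfl⟩
    · simp [disp]
    · rcases Int.units_eq_one_or s with rfl | rfl
      · exact Or.inr ⟨(i, 1), Or.inl rfl, rfl⟩
      · exact Or.inr ⟨(i, -1), Or.inr rfl, rfl⟩
  · rintro (rfl | ⟨⟨i, e⟩, he, rfl⟩)
    · exact ⟨none, by simp [disp]⟩
    · rcases he with rfl | rfl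
      · exact ⟨some (i, 1), rfl⟩
      · exact ⟨some (i, -1), rfl⟩

theorem expect_unifOn {α : Type*} [Inhabited α] {s : Finset α} (hs : s.Nonempty)
    (f : α → ℝ≥0∞) : (unifOn s).expect f = (s.card : ℝ≥0∞)⁻¹ * ∑ a ∈ s, f a := by
  rw [unifOn, dif_pos hs, PMF.expect, tsum_eq_sum (s := s) fun a ha => by simp [ha],
    Finset.mul_sum]
  exact Finset.sum_congr rfl fun a ha => by simp [ha]

theorem expect_unifOn_insert_nbrs (z : Site d) (f : Site d → ℝ≥0∞) :
    (unifOn (insert z (nbrs z))).expect f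
      = (Fintype.card (Move d) : ℝ≥0∞)⁻¹ * ∑ o : Move d, f (z + disp o) := by
  have hinj : Function.Injective fun o : Move d => z + disp o :=
    fun _ _ h => disp_injective (add_left_cancel h)
  rw [expect_unifOn (Finset.insert_nonempty _ _), ← image_add_disp,
    Finset.card_image_of_injective _ hinj, Finset.card_univ,
    Finset.sum_image fun _ _ _ _ h => hinj h]

theorem avoids_single {n : ℕ} {z : Site d} : avoids n (Finsupp.single z 1) ↔ ¬ onBdry n z := by
  refine ⟨fun h hz => by simpa using h z hz, fun hz w hw => ?_⟩
  exact Finsupp.single_eq_of_ne' fun hzw => hz (hzw ▸ hw)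

open scoped Classical in
/-- The children of the particle evolve independently, so its survival probability is the
offspring generating function evaluated at the mean survival probability of one child. -/
theorem survProb_single_succ (P : PMF ℕ) (n t : ℕ) (z : Site d) :
    survProb (aperiodicStep P) (Finsupp.single z 1) n (t + 1)
      = if onBdry n z then 0 else P.expect fun k =>
          ((Fintype.card (Move d) : ℝ≥0∞)⁻¹
            * ∑ o : Move d, survProb (aperiodicStep P) (Finsupp.single (z + disp o) 1) n t)
            ^ k := by
  have hmul := survProb_stepOf_add (aperiodicChild (d := d) P) n t
  have hzero := survProb_stepOf_zero (aperiodicChild (d := d) P) n t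
  have hiter := expect_iterConv (f := fun c => survProb (stepOf (aperiodicChild P)) c n t)
    hmul hzero
  unfold aperiodicStep
  rw [survProb_succ, expect_stepOf hmul hzero]
  simp only [Finsupp.prod_single_index, pow_zero, pow_one, aperiodicChild, childLaw,
    PMF.expect_bind, avoids_single, ite_not, hiter, PMF.expect_map,
    expect_unifOn_insert_nbrs, Function.comp_def]

theorem onBdry_of_abs_le {n : ℕ} {u w : Site d} (huw : |u| ≤ |w|) (hw : ∀ j, |w j| ≤ n)
    (hu : onBdry n u) : onBdry n w := by
  obtain ⟨-, j, hj⟩ := hu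
  exact ⟨hw, j, le_antisymm (hw j) (hj ▸ huw j)⟩

theorem inInterior_of_not_onBdry {n : ℕ} {w : Site d} (hw : ∀ j, |w j| ≤ n)
    (hwb : ¬ onBdry n w) : inInterior n w :=
  fun j => (hw j).lt_of_ne fun hj => hwb ⟨hw, j, hj⟩

def AbsAntitoneOn (n : ℕ) (f : Site d → ℝ≥0∞) : Prop :=
  ∀ ⦃u w : Site d⦄, |u| ≤ |w| → (∀ j, |w j| ≤ n) → f w ≤ f u

theorem abs_add_disp_le_of_inInterior {n : ℕ} {w : Site d} (hw : inInterior n w) (o : Move d)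
    (j : Fin d) : |(w + disp o) j| ≤ n := by
  have := hw j
  rcases o with _ | ⟨i, s⟩
  · simpa [disp] using this.le
  · rcases Int.units_eq_one_or s with rfl | rfl <;>
      by_cases hj : j = i <;> simp [disp, hj] <;> grind

section MoveSum

variable {n : ℕ} {f : Site d → ℝ≥0∞}

theorem sum_add_disp_le_of_perm (hf : AbsAntitoneOn n f) {u w : Site d} (hw : inInterior n w)
    (σ : Equiv.Perm (Move d)) (hσ : ∀ o, |u + disp (σ o)| ≤ |w + disp o|) :
    ∑ o, f (w + disp o) ≤ ∑ o, f (u + disp o) := by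
  rw [← Equiv.sum_comp σ fun o => f (u + disp o)]
  exact Finset.sum_le_sum fun o _ => hf (hσ o) (abs_add_disp_le_of_inInterior hw o)

theorem sum_add_disp_update_neg (hf : AbsAntitoneOn n f) {z : Site d} (hz : inInterior n z)
    (i : Fin d) : ∑ o, f (Function.update z i (-z i) + disp o) = ∑ o, f (z + disp o) := by
  let σ : Equiv.Perm (Move d) := Equiv.swap (some (i, 1)) (some (i, -1))
  have hσ : ∀ o, |z + disp (σ o)| = |Function.update z i (-z i) + disp o| := by
    intro o
    ext j
    rcases o with _ | ⟨k, s⟩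
    · by_cases hj : j = i <;> simp [σ, Equiv.swap_apply_def, disp, hj]
    · rcases Int.units_eq_one_or s with rfl | rfl <;> by_cases hk : k = i <;>
        by_cases hj : j = i <;>
        simp [σ, Equiv.swap_apply_def, disp, Pi.single_apply, hk, hj] <;> grind
  have hz' : inInterior n (Function.update z i (-z i)) := fun j => by
    by_cases hj : j = i <;> simp [hj, hz j, hz i]
  refine le_antisymm (sum_add_disp_le_of_perm hf hz' σ fun o => (hσ o).le)
    (sum_add_disp_le_of_perm hf hz σ fun o => ?_)
  simpa [σ] using (hσ (σ o)).ge

/-- Moves of `update u i c` are paired with moves of `u` through the cycle `-eᵢ ↦ 0 ↦ eᵢ ↦ -eᵢ`: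
the step towards the origin is matched with staying put, and staying put with a step `+eᵢ`. -/
theorem sum_add_disp_update_le_of_abs_lt (hf : AbsAntitoneOn n f) {u : Site d} {i : Fin d} {c : ℤ}
    (hc : |u i| < c) (hw : inInterior n (Function.update u i c)) :
    ∑ o, f (Function.update u i c + disp o) ≤ ∑ o, f (u + disp o) := by
  refine sum_add_disp_le_of_perm hf hw
    (Equiv.swap (some (i, -1)) none * Equiv.swap none (some (i, 1))) fun o j => ?_
  rcases o with _ | ⟨k, s⟩
  · by_cases hj : j = i
    · simp [Equiv.swap_apply_def, disp, hj]
      grind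
    · simp [Equiv.swap_apply_def, disp, hj]
  · rcases Int.units_eq_one_or s with rfl | rfl <;> by_cases hk : k = i <;>
      by_cases hj : j = i <;>
      simp [Equiv.swap_apply_def, disp, Pi.single_apply, hk, hj] <;> grind

theorem sum_add_disp_update_abs (hf : AbsAntitoneOn n f) {z : Site d} (hz : inInterior n z)
    (i : Fin d) : ∑ o, f (Function.update z i |z i| + disp o) = ∑ o, f (z + disp o) := by
  rcases abs_cases (z i) with ⟨h, -⟩ | ⟨h, -⟩ <;> rw [h]
  · rw [Function.update_eq_self]
  · exact sum_add_disp_update_neg hf hz i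

theorem sum_add_disp_update_le (hf : AbsAntitoneOn n f) {u : Site d} {i : Fin d} {c : ℤ}
    (hc : |u i| ≤ |c|) (hw : inInterior n (Function.update u i c)) :
    ∑ o, f (Function.update u i c + disp o) ≤ ∑ o, f (u + disp o) := by
  have hu : inInterior n u := fun j => by
    by_cases hj : j = i
    · subst hj; exact hc.trans_lt (by simpa using hw j)
    · simpa [hj] using hw j
  calc ∑ o, f (Function.update u i c + disp o)
      = ∑ o, f (Function.update u i |c| + disp o) := by
        simpa using (sum_add_disp_update_abs hf hw i).symm
    _ ≤ ∑ o, f (u + disp o) := by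
        rcases hc.lt_or_eq with hlt | heq
        · exact sum_add_disp_update_le_of_abs_lt hf (by simpa using hlt) fun j => by
            by_cases hj : j = i
            · subst hj; simpa using hw j
            · simpa [hj] using hw j
        · rw [← heq, sum_add_disp_update_abs hf hu i]

theorem sum_add_disp_le_of_abs_le (hf : AbsAntitoneOn n f) {u w : Site d} (huw : |u| ≤ |w|)
    (hw : inInterior n w) : ∑ o, f (w + disp o) ≤ ∑ o, f (u + disp o) := by
  classical
  have hpw : ∀ (s : Finset (Fin d)) j, |s.piecewise w u j| ≤ |w j| := fun s j => by
    by_cases hj : j ∈ s <;> simp [hj, show |u j| ≤ |w j| from huw j]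
  suffices ∀ s : Finset (Fin d), ∑ o, f (s.piecewise w u + disp o) ≤ ∑ o, f (u + disp o) by
    simpa using this Finset.univ
  intro s
  induction s using Finset.induction_on with
  | empty => simp
  | insert i s hi ih =>
    rw [Finset.piecewise_insert]
    refine (sum_add_disp_update_le hf (hpw s i) fun j => ?_).trans ih
    rw [← Finset.piecewise_insert]
    exact (hpw _ j).trans_lt (hw j)

end MoveSum

theorem absAntitoneOn_survProb_single (P : PMF ℕ) (n t : ℕ) :
    AbsAntitoneOn n fun z : Site d => survProb (aperiodicStep P) (Finsupp.single z 1) n t := by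
  induction t with
  | zero =>
    intro u w huw hw
    have hub := onBdry_of_abs_le huw hw
    simp only [survProb_zero]
    split_ifs <;> simp_all [avoids_single]
  | succ t ih =>
    intro u w huw hw
    simp only [survProb_single_succ]
    by_cases hwb : onBdry n w
    · simp [hwb]
    have hsum := sum_add_disp_le_of_abs_le ih huw (inInterior_of_not_onBdry hw hwb)
    simp only [hwb, mt (onBdry_of_abs_le huw hw) hwb, if_false]
    exact PMF.expect_mono fun k => pow_le_pow_left' (mul_le_mul_right hsum _) k

theorem aperiodic_hittingTime_stochastically_monotone_general
    (d : ℕ) (P : PMF ℕ) (n : ℕ)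
    (x y : Site d) (hx0 : 0 ≤ x) (hxy : x ≤ y)
    (hy : inInterior n y) (t : ℕ) :
    survProb (aperiodicStep P) (Finsupp.single y 1) n t
      ≤ survProb (aperiodicStep P) (Finsupp.single x 1) n t := by
  have habs : |x| ≤ |y| := fun i => by
    simpa only [Pi.abs_apply, abs_of_nonneg (hx0 i)] using (hxy i).trans (le_abs_self (y i))
  exact absAntitoneOn_survProb_single P n t habs fun j => (hy j).le

/-- For the aperiodic nearest-neighbors branching random walk on `ℤ^d`
with offspring distribution `P`, for every `n ≥ 1` and all `x ⪯ y` in the intersection of the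
positive orthant with the interior of `Λ_n`, we have `τ_n^y ≤_st τ_n^x`, i.e.
`ℙ(τ_n^y > t) ≤ ℙ(τ_n^x > t)` for every `t`. -/
theorem aperiodic_hittingTime_stochastically_monotone
    (d : ℕ) (hd : 0 < d) (P : PMF ℕ) (n : ℕ) (hn : 1 ≤ n)
    (x y : Site d) (hx0 : 0 ≤ x) (hy0 : 0 ≤ y) (hxy : x ≤ y)
    (hx : inInterior n x) (hy : inInterior n y) (t : ℕ) :
    survProb (aperiodicStep P) (Finsupp.single y 1) n t
      ≤ survProb (aperiodicStep P) (Finsupp.single x 1) n t :=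
  aperiodic_hittingTime_stochastically_monotone_general d P n x y hx0 hxy hy t

end BRW
end

section
/- Let (β_t^{(0,0)}) and (β_t^{(1,0)}) be aperiodic nearest-neighbors branching random walks on ℤ² started by a single particle at (0,0) and at (1,0) respectively, with the same offspring distribution 𝒫. For every n ≥ 1 there exists a coupling of the two processes on a common probability space such that τ_n^{(1,0)} ≤ τ_n^{(0,0)} almost surely; in particular τ_n^{(1,0)} ≤_st τ_n^{(0,0)}. -/
open scoped ENNReal
open MeasureTheory Filter

/-!
Run the two walks as the two coordinates of a single branching random walk on pairs of sites.
A pair `(x, y)` with `x` dominated by `y` (same height, `|x₀| ≤ |y₀|`) places each offspring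
at a uniform child `w` of `x` and its partner at the image of `w` under a bijection between the
aperiodic neighbourhoods of `x` and `y` which preserves domination. Both coordinates are then
aperiodic branching random walks, every particle of the walk started at `(0,0)` is dominated by
its partner, and so it cannot reach `∂Λ_n` before the walk started at `(1,0)` does: the latter
moves by steps of length at most one from inside `Λ_n` (or starts on `∂Λ_n` when `n = 1`).
The coupled chain has countably many states, so it can be realised on `[0,1)` with Lebesgue
measure by nested subdivisions of intervals. Stochastic domination follows from the almost sure
inequality.
-/

namespace BRW

section Convolution

variable {α β : Type*} [AddCommMonoid α] [AddCommMonoid β]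

noncomputable abbrev convCommMonoid : CommMonoid (PMF α) where
  mul := conv
  one := PMF.pure 0
  mul_assoc := Std.Associative.assoc (op := conv)
  mul_comm := Std.Commutative.comm (op := conv)
  one_mul p := show conv (PMF.pure 0) p = p by simp [conv]
  mul_one p := show conv p (PMF.pure 0) = p by simp [conv]

attribute [local instance] convCommMonoid

lemma iterConv_eq_pow (p : PMF α) (k : ℕ) : iterConv p k = p ^ k := by
  induction k with
  | zero => rfl
  | succ k ih => rw [pow_succ', ← ih]; rfl

noncomputable def mapConvHom (φ : α →+ β) : PMF α →* PMF β where
  toFun := PMF.map φ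
  map_one' := PMF.pure_map _ _ |>.trans (by rw [map_zero]; rfl)
  map_mul' p q := by
    change (conv p q).map φ = conv (p.map φ) (q.map φ)
    simp only [conv, PMF.map_bind, PMF.bind_map, PMF.pure_map, Function.comp_def, map_add]

lemma mapConvHom_apply (φ : α →+ β) (p : PMF α) : mapConvHom φ p = p.map φ := rfl

def supportedIn (S : AddSubmonoid α) : Submonoid (PMF α) where
  carrier := {p | p.support ⊆ S}
  one_mem' := by
    change (PMF.pure 0 : PMF α).support ⊆ S
    simp [S.zero_mem]
  mul_mem' {p q} hp hq := by
    change (conv p q).support ⊆ S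
    simp only [conv, PMF.support_bind, PMF.support_pure, Set.iUnion_subset_iff,
      Set.singleton_subset_iff]
    exact fun a ha b hb => S.add_mem (hp ha) (hq hb)

lemma mem_supportedIn {S : AddSubmonoid α} {p : PMF α} :
    p ∈ supportedIn S ↔ p.support ⊆ S :=
  Iff.rfl

variable {d d' : ℕ}

lemma stepOf_eq_prod (child : Site d → PMF (Config d)) (η : Config d) :
    stepOf child η = η.prod fun z k => child z ^ k := by
  simp only [stepOf, Finsupp.prod, Finset.prod_eq_fold, iterConv_eq_pow]
  rfl

noncomputable def offspringLaw (P : PMF ℕ) (μ : PMF (Site d)) : PMF (Config d) :=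
  P.bind fun k => iterConv (μ.map fun w => Finsupp.single w 1) k

lemma childLaw_eq_offspringLaw (P : PMF ℕ) (nbr : Site d → Finset (Site d)) (z : Site d) :
    childLaw P nbr z = offspringLaw P (unifOn (nbr z)) := rfl

lemma map_offspringLaw (P : PMF ℕ) (μ : PMF (Site d)) (f : Site d → Site d') :
    (offspringLaw P μ).map (Finsupp.mapDomain f) = offspringLaw P (μ.map f) := by
  simp only [offspringLaw, PMF.map_bind, iterConv_eq_pow]
  congr 1
  funext k
  change mapConvHom (Finsupp.mapDomain.addMonoidHom f) _ = _
  rw [map_pow, mapConvHom_apply, PMF.map_comp, PMF.map_comp]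
  congr 2
  funext w
  simp

lemma support_offspringLaw_subset (P : PMF ℕ) (μ : PMF (Site d)) :
    (offspringLaw P μ).support ⊆ Finsupp.supported ℕ ℕ μ.support := by
  simp only [offspringLaw, PMF.support_bind, Set.iUnion_subset_iff, iterConv_eq_pow]
  intro k _
  refine Submonoid.pow_mem (supportedIn (Finsupp.supported ℕ ℕ μ.support).toAddSubmonoid) ?_ k
  rw [mem_supportedIn]
  simp only [PMF.support_map, Set.image_subset_iff]
  exact fun w hw => Finsupp.single_mem_supported ℕ 1 hw

lemma map_stepOf (child : Site d → PMF (Config d)) (child' : Site d' → PMF (Config d'))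
    (f : Site d → Site d') (h : ∀ z, (child z).map (Finsupp.mapDomain f) = child' (f z))
    (η : Config d) :
    (stepOf child η).map (Finsupp.mapDomain f) = stepOf child' (Finsupp.mapDomain f η) := by
  rw [stepOf_eq_prod, stepOf_eq_prod, Finsupp.prod_mapDomain_index (fun _ => pow_zero _)
    (fun _ _ _ => pow_add _ _ _)]
  change mapConvHom (Finsupp.mapDomain.addMonoidHom f) _ = _
  simp only [Finsupp.prod, map_prod, map_pow]
  exact Finset.prod_congr rfl fun z _ => by rw [← h]; rfl

lemma support_stepOf_subset (child : Site d → PMF (Config d)) {η : Config d}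
    (S : AddSubmonoid (Config d)) (h : ∀ z ∈ η.support, (child z).support ⊆ S) :
    (stepOf child η).support ⊆ S := by
  rw [stepOf_eq_prod]
  exact Submonoid.prod_mem (supportedIn S) fun z hz => Submonoid.pow_mem _ (h z hz) _

end Convolution

section PathLaw

variable {d d' : ℕ}

/-- `[f t, …, f 0]`: trajectories are recorded newest first, as in `pathLaw`. -/
def revPrefix {β : Type*} (f : ℕ → β) (t : ℕ) : List β :=
  (List.range (t + 1)).map fun s => f (t - s)

lemma revPrefix_zero {β : Type*} (f : ℕ → β) : revPrefix f 0 = [f 0] := rfl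

lemma revPrefix_succ {β : Type*} (f : ℕ → β) (t : ℕ) :
    revPrefix f (t + 1) = f (t + 1) :: revPrefix f t := by
  rw [revPrefix, List.range_succ_eq_map, List.map_cons, List.map_map]
  congr 1
  exact List.map_congr_left fun s _ => by simp [Nat.add_sub_add_right]

lemma headI_revPrefix {β : Type*} [Inhabited β] (f : ℕ → β) (t : ℕ) :
    (revPrefix f t).headI = f t := by
  cases t <;> simp [revPrefix_zero, revPrefix_succ]

lemma mem_revPrefix {β : Type*} {f : ℕ → β} {t : ℕ} {b : β} :
    b ∈ revPrefix f t ↔ ∃ s ≤ t, f s = b := by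
  simp only [revPrefix, List.mem_map, List.mem_range]
  constructor
  · rintro ⟨s, hs, rfl⟩
    exact ⟨t - s, Nat.sub_le t s, rfl⟩
  · rintro ⟨s, hs, rfl⟩
    exact ⟨t - s, by omega, by rw [Nat.sub_sub_self hs]⟩

lemma pathLaw_succ_apply_cons (step : Config d → PMF (Config d)) (init : Config d) (t : ℕ)
    (c : Config d) (l : List (Config d)) :
    pathLaw step init (t + 1) (c :: l) = pathLaw step init t l * step l.headI c := by
  rw [pathLaw, PMF.bind_apply, tsum_eq_single l]
  · simp [PMF.map_apply]
  · intro l' hl'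
    simp [PMF.map_apply, Ne.symm hl']

lemma length_of_mem_support_pathLaw {step : Config d → PMF (Config d)} {init : Config d}
    {t : ℕ} {l : List (Config d)} (hl : l ∈ (pathLaw step init t).support) :
    l.length = t + 1 := by
  induction t generalizing l with
  | zero => simp_all [pathLaw]
  | succ t ih =>
    simp only [pathLaw, PMF.support_bind, PMF.support_map, Set.mem_iUnion] at hl
    obtain ⟨l', hl', c, -, rfl⟩ := hl
    simp [ih hl']

lemma pathLaw_map {step : Config d → PMF (Config d)} {step' : Config d' → PMF (Config d')}
    (f : Site d → Site d')
    (h : ∀ η, (step η).map (Finsupp.mapDomain f) = step' (Finsupp.mapDomain f η))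
    (init : Config d) (t : ℕ) :
    (pathLaw step init t).map (List.map (Finsupp.mapDomain f))
      = pathLaw step' (Finsupp.mapDomain f init) t := by
  induction t with
  | zero => simp [pathLaw, PMF.pure_map]
  | succ t ih =>
    rw [pathLaw, pathLaw, ← ih, PMF.map_bind, PMF.bind_map]
    congr 1
    funext l
    have hhead : Finsupp.mapDomain f l.headI = (l.map (Finsupp.mapDomain f)).headI := by
      cases l <;> simp
    rw [Function.comp_apply, ← hhead, ← h, PMF.map_comp, PMF.map_comp]
    rfl

variable {Ω : Type*} [MeasurableSpace Ω] {Pr : Measure Ω} {step : Config d → PMF (Config d)}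
  {init : Config d} {X : ℕ → Ω → Config d}

lemma HasPathLaw.map_revPrefix (hX : HasPathLaw Pr step init X) (t : ℕ) :
    Pr.map (fun ω => revPrefix (X · ω) t) = (pathLaw step init t).toMeasure :=
  hX t

lemma HasPathLaw.aemeasurable (hX : HasPathLaw Pr step init X) (t : ℕ) :
    AEMeasurable (fun ω => revPrefix (X · ω) t) Pr :=
  AEMeasurable.of_map_ne_zero <| (hX.map_revPrefix t).trans_ne (IsProbabilityMeasure.ne_zero _)

lemma HasPathLaw.measure_preimage (hX : HasPathLaw Pr step init X) (t : ℕ)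
    (s : Set (List (Config d))) :
    Pr {ω | revPrefix (X · ω) t ∈ s} = (pathLaw step init t).toMeasure s := by
  rw [← hX.map_revPrefix t,
    Measure.map_apply_of_aemeasurable (hX.aemeasurable t) MeasurableSet.of_discrete]
  rfl

lemma HasPathLaw.ae_mem_support (hX : HasPathLaw Pr step init X) (t : ℕ) :
    ∀ᵐ ω ∂Pr, revPrefix (X · ω) t ∈ (pathLaw step init t).support := by
  rw [ae_iff]
  simp only [← Set.mem_compl_iff]
  rw [hX.measure_preimage, PMF.toMeasure_apply_eq_zero_iff (hs := MeasurableSet.of_discrete)]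
  exact disjoint_compl_right

lemma HasPathLaw.ae_succ_mem_support (hX : HasPathLaw Pr step init X) :
    ∀ᵐ ω ∂Pr, X 0 ω = init ∧ ∀ t, X (t + 1) ω ∈ (step (X t ω)).support := by
  have hsucc :
      ∀ᵐ ω ∂Pr, ∀ t, revPrefix (X · ω) (t + 1) ∈ (pathLaw step init (t + 1)).support :=
    ae_all_iff.2 fun t => hX.ae_mem_support (t + 1)
  filter_upwards [hX.ae_mem_support 0, hsucc] with ω hω0 hωsucc
  refine ⟨by simpa [revPrefix_zero, pathLaw] using hω0, fun t => ?_⟩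
  have hpos := hωsucc t
  rw [revPrefix_succ, PMF.mem_support_iff, pathLaw_succ_apply_cons, headI_revPrefix] at hpos
  exact (PMF.mem_support_iff _ _).2 (right_ne_zero_of_mul hpos)

lemma HasPathLaw.mapDomain {step' : Config d' → PMF (Config d')}
    (hX : HasPathLaw Pr step init X) (f : Site d → Site d')
    (h : ∀ η, (step η).map (Finsupp.mapDomain f) = step' (Finsupp.mapDomain f η)) :
    HasPathLaw Pr step' (Finsupp.mapDomain f init) fun t ω => Finsupp.mapDomain f (X t ω) := by
  intro t
  have hcomp : (fun ω => revPrefix (fun s => Finsupp.mapDomain f (X s ω)) t)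
      = List.map (Finsupp.mapDomain f) ∘ fun ω => revPrefix (X · ω) t := by
    funext ω
    simp [revPrefix]
  change Pr.map (fun ω => revPrefix (fun s => Finsupp.mapDomain f (X s ω)) t) = _
  rw [hcomp, ← AEMeasurable.map_map_of_aemeasurable Measurable.of_discrete.aemeasurable
    (hX.aemeasurable t), hX.map_revPrefix t, PMF.toMeasure_map (hf := Measurable.of_discrete),
    pathLaw_map f h]

lemma HasPathLaw.survProb_eq (hX : HasPathLaw Pr step init X) (n t : ℕ) :
    survProb step init n t = Pr {ω | ∀ s ≤ t, avoids n (X s ω)} := by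
  rw [survProb, ← hX.measure_preimage]
  simp [mem_revPrefix]

lemma lt_hitTime_iff (n t : ℕ) (f : ℕ → Config d) :
    (t : ℕ∞) < hitTime n f ↔ ∀ s ≤ t, avoids n (f s) := by
  constructor
  · intro h s hs
    by_contra hbad
    have : hitTime n f ≤ s := sInf_le ⟨s, hbad, rfl⟩
    exact (h.trans_le this).not_ge (by exact_mod_cast hs)
  · intro h
    refine (ENat.add_one_le_iff (ENat.natCast_ne_top t)).1 (le_sInf ?_)
    rintro _ ⟨s, hs, rfl⟩
    have : t < s := by
      by_contra! hle
      exact hs (h s hle)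
    exact ENat.natCast_le_natCast.2 this

lemma survProb_le_of_ae_hitTime_le {step' : Config d → PMF (Config d)} {init' : Config d}
    {Y : ℕ → Ω → Config d} (hX : HasPathLaw Pr step init X)
    (hY : HasPathLaw Pr step' init' Y)
    {n : ℕ} (h : ∀ᵐ ω ∂Pr, hitTime n (X · ω) ≤ hitTime n (Y · ω)) (t : ℕ) :
    survProb step init n t ≤ survProb step' init' n t := by
  rw [hX.survProb_eq, hY.survProb_eq]
  refine measure_mono_ae (h.mono fun ω hω => ?_)
  simp only [← lt_hitTime_iff]
  exact fun hlt => hlt.trans_le hω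

end PathLaw

section Subdivision

open Encodable Filter Topology

variable {α : Type*} [Encodable α] [MeasurableSpace α]

noncomputable def massBelow (q : PMF α) (k : ℕ) : ℝ := (q.toMeasure {c | encode c < k}).toReal

lemma massBelow_zero (q : PMF α) : massBelow q 0 = 0 := by simp [massBelow]

lemma monotone_massBelow (q : PMF α) : Monotone (massBelow q) := fun _ _ hkm =>
  ENNReal.toReal_mono (measure_ne_top _ _)
    (measure_mono fun _ (hc : _ < _) => show _ < _ from hc.trans_le hkm)

lemma massBelow_le_one (q : PMF α) (k : ℕ) : massBelow q k ≤ 1 :=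
  ENNReal.toReal_le_of_le_ofReal zero_le_one (ENNReal.ofReal_one ▸ prob_le_one)

lemma tendsto_massBelow (q : PMF α) : Tendsto (massBelow q) atTop (𝓝 1) := by
  have hmono : Monotone fun k => {c : α | encode c < k} :=
    fun _ _ hkm _ (hc : _ < _) => show _ < _ from hc.trans_le hkm
  have hunion : (⋃ k, {c : α | encode c < k}) = Set.univ :=
    Set.eq_univ_of_forall fun c => Set.mem_iUnion.2 ⟨encode c + 1, Nat.lt_succ_self _⟩
  have := tendsto_measure_iUnion_atTop (μ := q.toMeasure) hmono
  rw [hunion, measure_univ] at this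
  exact (ENNReal.tendsto_toReal ENNReal.one_ne_top).comp this

lemma massBelow_succ_of_forall_encode_ne (q : PMF α) {k : ℕ} (hk : ∀ c : α, encode c ≠ k) :
    massBelow q (k + 1) = massBelow q k := by
  simp only [massBelow, Nat.lt_succ_iff_lt_or_eq, hk, or_false]

noncomputable def cutPoint (q : PMF α) (I : ℝ × ℝ) (k : ℕ) : ℝ :=
  I.1 + (I.2 - I.1) * massBelow q k

noncomputable def subcell (q : PMF α) (I : ℝ × ℝ) (c : α) : ℝ × ℝ :=
  (cutPoint q I (encode c), cutPoint q I (encode c + 1))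

lemma monotone_cutPoint (q : PMF α) {I : ℝ × ℝ} (hI : I.1 ≤ I.2) :
    Monotone (cutPoint q I) :=
  fun _ _ hkm => add_le_add_right (mul_le_mul_of_nonneg_left (monotone_massBelow q hkm)
    (sub_nonneg.2 hI)) _

lemma disjoint_Ico_subcell (q : PMF α) {I : ℝ × ℝ} (hI : I.1 ≤ I.2) {c c' : α}
    (h : c ≠ c') :
    Disjoint (Set.Ico (subcell q I c).1 (subcell q I c).2)
      (Set.Ico (subcell q I c').1 (subcell q I c').2) :=
  (monotone_cutPoint q hI).pairwise_disjoint_on_Ico_succ (encode_injective.ne h)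

lemma exists_mem_Ico_subcell (q : PMF α) {I : ℝ × ℝ} {x : ℝ} (hx : x ∈ Set.Ico I.1 I.2) :
    ∃ c, x ∈ Set.Ico (subcell q I c).1 (subcell q I c).2 := by
  have hlim : Tendsto (cutPoint q I) atTop (𝓝 I.2) := by
    have := ((tendsto_massBelow q).const_mul (I.2 - I.1)).const_add I.1
    rwa [mul_one, add_sub_cancel] at this
  have hex : ∃ k, x < cutPoint q I k := (hlim.eventually (eventually_gt_nhds hx.2)).exists
  classical
  obtain ⟨j, hj⟩ : ∃ j, Nat.find hex = j + 1 := by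
    refine Nat.exists_eq_add_one_of_ne_zero fun h0 => ?_
    have := Nat.find_spec hex
    rw [h0, cutPoint, massBelow_zero] at this
    linarith [hx.1]
  have hlo : cutPoint q I j ≤ x := not_lt.1 (Nat.find_min hex (by omega))
  have hhi : x < cutPoint q I (j + 1) := hj ▸ Nat.find_spec hex
  by_contra! hnone
  have hstall : cutPoint q I (j + 1) = cutPoint q I j := by
    rw [cutPoint, cutPoint, massBelow_succ_of_forall_encode_ne q fun c hc => ?_]
    exact hnone c ⟨by simpa [subcell, hc] using hlo, by simpa [subcell, hc] using hhi⟩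
  exact (hhi.trans_eq hstall).not_ge hlo

noncomputable def pick [Nonempty α] (q : PMF α) (I : ℝ × ℝ) (x : ℝ) : α :=
  Classical.epsilon fun c => x ∈ Set.Ico (subcell q I c).1 (subcell q I c).2

lemma pick_eq_iff [Nonempty α] (q : PMF α) {I : ℝ × ℝ} {x : ℝ} (hx : x ∈ Set.Ico I.1 I.2)
    (c : α) : pick q I x = c ↔ x ∈ Set.Ico (subcell q I c).1 (subcell q I c).2 := by
  have hpick := Classical.epsilon_spec (exists_mem_Ico_subcell q hx)
  refine ⟨fun h => h ▸ hpick, fun hc => ?_⟩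
  by_contra hne
  exact Set.disjoint_left.1 (disjoint_Ico_subcell q (hx.1.trans hx.2.le) hne) hpick hc

variable [MeasurableSingletonClass α]

lemma massBelow_encode_succ (q : PMF α) (c : α) :
    massBelow q (encode c + 1) = massBelow q (encode c) + (q c).toReal := by
  have hset : {c' : α | encode c' < encode c + 1} = {c' | encode c' < encode c} ∪ {c} := by
    ext c'
    simp only [Set.mem_ofPred_eq, Set.mem_union, Set.mem_singleton_iff, Nat.lt_succ_iff_lt_or_eq,
      encode_inj]
  rw [massBelow, hset, measure_union (by simp) (.of_discrete), ENNReal.toReal_add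
    (measure_ne_top _ _) (measure_ne_top _ _), PMF.toMeasure_apply_singleton _ _ (.of_discrete)]
  rfl

lemma subcell_width (q : PMF α) (I : ℝ × ℝ) (c : α) :
    (subcell q I c).2 - (subcell q I c).1 = (I.2 - I.1) * (q c).toReal := by
  simp only [subcell, cutPoint, massBelow_encode_succ]
  ring

lemma Ico_subcell_subset (q : PMF α) (I : ℝ × ℝ) (c : α) :
    Set.Ico (subcell q I c).1 (subcell q I c).2 ⊆ Set.Ico I.1 I.2 := by
  intro x ⟨hlo, hhi⟩
  have hpos : 0 < (I.2 - I.1) * (q c).toReal := by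
    rw [← subcell_width]
    linarith
  have hI : I.1 < I.2 := by
    have := pos_of_mul_pos_left hpos ENNReal.toReal_nonneg
    linarith
  have h0 := monotone_cutPoint q hI.le (Nat.zero_le (encode c))
  have h1 : cutPoint q I (encode c + 1) ≤ I.2 := by
    have := mul_le_mul_of_nonneg_left (massBelow_le_one q (encode c + 1)) (sub_nonneg.2 hI.le)
    rw [cutPoint]
    linarith
  simp only [cutPoint, massBelow_zero, mul_zero, add_zero] at h0
  exact ⟨h0.trans hlo, hhi.trans_le h1⟩

end Subdivision

section Realization

variable {d : ℕ}

noncomputable instance : Encodable (Config d) := Encodable.ofCountable _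

variable (step : Config d → PMF (Config d)) (init : Config d)

/-- The empty path is the one before time `0`. -/
noncomputable def nextLaw : List (Config d) → PMF (Config d)
  | [] => PMF.pure init
  | c :: _ => step c

noncomputable def pathCell : List (Config d) → ℝ × ℝ
  | [] => (0, 1)
  | c :: l => subcell (nextLaw step init l) (pathCell l) c

noncomputable def samplePath : ℕ → ℝ → List (Config d)
  | 0, _ => []
  | t + 1, x =>
    pick (nextLaw step init (samplePath t x)) (pathCell step init (samplePath t x)) x
      :: samplePath t x

noncomputable def sampleChain (t : ℕ) (x : ℝ) : Config d :=
  (samplePath step init (t + 1) x).headI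

lemma revPrefix_sampleChain (t : ℕ) (x : ℝ) :
    revPrefix (sampleChain step init · x) t = samplePath step init (t + 1) x := by
  induction t with
  | zero => rfl
  | succ t ih => rw [revPrefix_succ, ih]; rfl

lemma Ico_pathCell_subset (l : List (Config d)) :
    Set.Ico (pathCell step init l).1 (pathCell step init l).2 ⊆ Set.Ico 0 1 := by
  induction l with
  | nil => exact subset_rfl
  | cons c l ih => exact (Ico_subcell_subset _ _ c).trans ih

lemma samplePath_eq_iff {x : ℝ} (hx : x ∈ Set.Ico (0 : ℝ) 1) (t : ℕ) (l : List (Config d)) :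
    samplePath step init t x = l ↔
      l.length = t ∧ x ∈ Set.Ico (pathCell step init l).1 (pathCell step init l).2 := by
  induction t generalizing l with
  | zero => cases l <;> simp [samplePath, pathCell, hx]
  | succ t ih =>
    cases l with
    | nil => simp [samplePath]
    | cons c l =>
      simp only [samplePath, List.cons.injEq, List.length_cons, Nat.add_right_cancel_iff]
      constructor
      · rintro ⟨hpick, rfl⟩
        obtain ⟨hlen, hxl⟩ := (ih _).1 rfl
        exact ⟨hlen, (pick_eq_iff _ hxl c).1 hpick⟩
      · rintro ⟨hlen, hxc⟩
        have hxl := Ico_subcell_subset _ _ c hxc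
        obtain rfl := (ih l).2 ⟨hlen, hxl⟩
        exact ⟨(pick_eq_iff _ hxl c).2 hxc, rfl⟩

lemma pathCell_width {t : ℕ} {l : List (Config d)} (hl : l.length = t + 1) :
    (pathCell step init l).2 - (pathCell step init l).1 = (pathLaw step init t l).toReal := by
  induction t generalizing l with
  | zero =>
    obtain ⟨c, rfl⟩ := List.length_eq_one_iff.1 hl
    simp [pathCell, subcell_width, pathLaw, nextLaw, PMF.pure_apply]
    convert rfl
  | succ t ih =>
    obtain ⟨c, l, rfl⟩ := List.exists_cons_of_length_eq_add_one hl
    obtain ⟨c', l', rfl⟩ := List.exists_cons_of_length_eq_add_one (Nat.succ_inj.1 hl)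
    rw [pathCell, subcell_width, ih (Nat.succ_inj.1 hl), pathLaw_succ_apply_cons,
      ENNReal.toReal_mul]
    rfl

lemma samplePath_preimage_inter_Ico (t : ℕ) (l : List (Config d)) :
    samplePath step init t ⁻¹' {l} ∩ Set.Ico 0 1 =
      {_x | l.length = t} ∩ Set.Ico (pathCell step init l).1 (pathCell step init l).2 := by
  ext x
  simp only [Set.mem_inter_iff, Set.mem_preimage, Set.mem_singleton_iff, Set.mem_ofPred_eq]
  constructor
  · rintro ⟨hpath, hx⟩
    exact (samplePath_eq_iff step init hx t l).1 hpath
  · rintro ⟨hlen, hxl⟩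
    have hx := Ico_pathCell_subset step init l hxl
    exact ⟨(samplePath_eq_iff step init hx t l).2 ⟨hlen, hxl⟩, hx⟩

instance : IsProbabilityMeasure (volume.restrict (Set.Ico (0 : ℝ) 1)) :=
  ⟨by rw [Measure.restrict_apply_univ, Real.volume_Ico, sub_zero, ENNReal.ofReal_one]⟩

theorem hasPathLaw_sampleChain :
    HasPathLaw (volume.restrict (Set.Ico (0 : ℝ) 1)) step init (sampleChain step init) := by
  intro t
  change Measure.map (fun x => revPrefix (sampleChain step init · x) t) _ = _
  simp_rw [revPrefix_sampleChain]
  have hpre := samplePath_preimage_inter_Ico step init (t + 1)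
  have hmeas : Measurable fun x : Set.Ico (0 : ℝ) 1 => samplePath step init (t + 1) x :=
    measurable_to_countable' fun l => by
      have : (fun x : Set.Ico (0 : ℝ) 1 => samplePath step init (t + 1) x) ⁻¹' {l}
          = Subtype.val ⁻¹' (samplePath step init (t + 1) ⁻¹' {l} ∩ Set.Ico 0 1) := by
        ext x
        simp
      rw [this, hpre]
      exact measurable_subtype_coe ((MeasurableSet.const _).inter measurableSet_Ico)
  refine Measure.ext_of_singleton fun l => ?_
  rw [Measure.map_apply_of_aemeasurable (aemeasurable_restrict_of_measurable_subtype
    measurableSet_Ico hmeas) (.singleton l), Measure.restrict_apply' measurableSet_Ico, hpre,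
    PMF.toMeasure_apply_singleton _ _ (.singleton l)]
  by_cases hl : l.length = t + 1
  · simp only [hl, Set.ofPred_true, Set.univ_inter, Real.volume_Ico]
    rw [pathCell_width step init hl, ENNReal.ofReal_toReal (PMF.apply_ne_top _ _)]
  · simp only [hl, Set.ofPred_false, Set.empty_inter, measure_empty]
    exact ((PMF.apply_eq_zero_iff _ _).2 fun hmem =>
      hl (length_of_mem_support_pathLaw hmem)).symm

end Realization

section Geometry

lemma mem_insert_nbrs_iff {z w : Site 2} :
    w ∈ insert z (nbrs z) ↔
      (w 1 = z 1 ∧ |w 0 - z 0| ≤ 1) ∨ (w 0 = z 0 ∧ |w 1 - z 1| = 1) := by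
  simp only [nbrs, Finset.mem_insert, funext_iff, Fin.forall_fin_two, Finset.mem_image,
    Finset.mem_product, Finset.mem_univ, Finset.mem_singleton, true_and, Function.update_apply,
    Prod.exists, exists_eq_or_imp, existsAndEq, Fin.exists_fin_two, reduceIte, one_ne_zero,
    zero_ne_one, abs_eq_max_neg]
  omega

/-- A matching of `{a - 1, a, a + 1}` with `{b - 1, b, b + 1}` that does not decrease `|·|` when
`|a| ≤ |b|`: a shift, reflected when `a` and `b` have opposite signs, except for `a = 0`,
`|b| = 1`, where `0` must stay fixed. -/
def coordMatch (a b u : ℤ) : ℤ :=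
  if a = 0 ∧ b = 1 then (if u = -1 then 2 else u)
  else if a = 0 ∧ b = -1 then (if u = 1 then -2 else u)
  else b + ((if 0 ≤ a then 1 else -1) * (if 0 ≤ b then 1 else -1)) * (u - a)

lemma abs_le_abs_coordMatch {a b u : ℤ} (hab : |a| ≤ |b|) (hu : |u - a| ≤ 1) :
    |u| ≤ |coordMatch a b u| := by
  simp only [coordMatch, abs_eq_max_neg] at *
  split_ifs <;> omega

lemma bijOn_coordMatch (a b : ℤ) :
    Set.BijOn (coordMatch a b) (Set.Icc (a - 1) (a + 1)) (Set.Icc (b - 1) (b + 1)) := by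
  have maps : Set.MapsTo (coordMatch a b) (Set.Icc (a - 1) (a + 1)) (Set.Icc (b - 1) (b + 1)) := by
    intro u hu
    simp only [coordMatch, Set.mem_Icc] at *
    split_ifs <;> omega
  have inj : Set.InjOn (coordMatch a b) (Set.Icc (a - 1) (a + 1)) := by
    intro u hu v hv h
    simp only [coordMatch, Set.mem_Icc] at *
    split_ifs at h <;> omega
  refine ⟨maps, inj, ?_⟩
  rw [← Finset.coe_Icc, ← Finset.coe_Icc] at *
  exact Finset.surjOn_of_injOn_of_card_le _ maps inj (by simp [Int.card_Icc]; omega)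

def childMatch (x y w : Site 2) : Site 2 :=
  if w 1 = x 1 then ![coordMatch (x 0) (y 0) (w 0), y 1] else ![y 0, y 1 + (w 1 - x 1)]

lemma childMatch_mem {x y w : Site 2} (hw : w ∈ insert x (nbrs x)) :
    childMatch x y w ∈ insert y (nbrs y) := by
  have hmaps := (bijOn_coordMatch (x 0) (y 0)).mapsTo (x := w 0)
  rw [mem_insert_nbrs_iff] at hw ⊢
  simp only [childMatch, Set.mem_Icc, abs_eq_max_neg] at *
  split_ifs <;>
    simp only [Fin.isValue, Matrix.cons_val_zero, Matrix.cons_val_one, Matrix.cons_val_fin_one,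
      true_and] <;>
    omega

lemma injOn_childMatch (x y : Site 2) :
    Set.InjOn (childMatch x y) (insert x (nbrs x) : Finset (Site 2)) := by
  intro w hw v hv h
  have hinj := (bijOn_coordMatch (x 0) (y 0)).injOn (x₁ := w 0) (x₂ := v 0)
  rw [Finset.mem_coe, mem_insert_nbrs_iff] at hw hv
  simp only [childMatch, funext_iff, Fin.forall_fin_two, Set.mem_Icc, abs_eq_max_neg] at *
  split_ifs at h <;>
    simp only [Fin.isValue, Matrix.cons_val_zero, Matrix.cons_val_one, Matrix.cons_val_fin_one,
      true_and] at h <;>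
    omega

lemma image_childMatch (x y : Site 2) :
    (insert x (nbrs x)).image (childMatch x y) = insert y (nbrs y) := by
  refine Finset.Subset.antisymm (fun v hv => ?_) fun v hv => ?_
  · obtain ⟨w, hw, rfl⟩ := Finset.mem_image.1 hv
    exact childMatch_mem hw
  rw [Finset.mem_image]
  rcases mem_insert_nbrs_iff.1 hv with ⟨hv1, hv0⟩ | ⟨hv0, hv1⟩
  · obtain ⟨u, hu, hmatch⟩ := (bijOn_coordMatch (x 0) (y 0)).surjOn
      (show v 0 ∈ Set.Icc (y 0 - 1) (y 0 + 1) by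
        simp only [Set.mem_Icc, abs_eq_max_neg] at *
        omega)
    refine ⟨![u, x 1], mem_insert_nbrs_iff.2 (Or.inl ?_), ?_⟩
    · simp only [Set.mem_Icc, abs_eq_max_neg, Fin.isValue, Matrix.cons_val_zero,
        Matrix.cons_val_one,
        Matrix.cons_val_fin_one, true_and] at *
      omega
    · simp [childMatch, hmatch, funext_iff, Fin.forall_fin_two, hv1]
  · refine ⟨![x 0, x 1 + (v 1 - y 1)], mem_insert_nbrs_iff.2 (Or.inr ?_), ?_⟩
    · simp only [abs_eq_max_neg, Fin.isValue, Matrix.cons_val_zero, Matrix.cons_val_one,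
        Matrix.cons_val_fin_one, true_and] at *
      omega
    · have hmove : v 1 - y 1 ≠ 0 := by simp only [abs_eq_max_neg] at hv1; omega
      simp [childMatch, funext_iff, Fin.forall_fin_two, hv0, hmove]

def Dominated (x y : Site 2) : Prop := x 1 = y 1 ∧ |x 0| ≤ |y 0|

lemma dominated_childMatch {x y w : Site 2} (hxy : Dominated x y) (hw : w ∈ insert x (nbrs x)) :
    Dominated w (childMatch x y w) := by
  obtain ⟨h1, h0⟩ := hxy
  rcases mem_insert_nbrs_iff.1 hw with ⟨hw1, hw0⟩ | ⟨hw0, hw1⟩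
  · simp only [Dominated, childMatch, if_pos hw1]
    exact ⟨by simp [hw1, h1], by simpa using abs_le_abs_coordMatch h0 hw0⟩
  · simp only [abs_eq_max_neg] at hw1
    simp only [Dominated, childMatch, if_neg (show w 1 ≠ x 1 by omega)]
    simp only [Fin.isValue, Matrix.cons_val_zero, Matrix.cons_val_one, Matrix.cons_val_fin_one, hw0]
    omega

lemma Dominated.inInterior {n : ℕ} {x y : Site 2} (hxy : Dominated x y) (hy : inInterior n y) :
    inInterior n x := by
  intro i
  fin_cases i
  · exact hxy.2.trans_lt (hy 0)
  · simpa [hxy.1] using hy 1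

lemma abs_le_of_mem_insert_nbrs {n : ℕ} {y w : Site 2} (hy : inInterior n y)
    (hw : w ∈ insert y (nbrs y)) (i : Fin 2) : |w i| ≤ n := by
  have h0 := hy 0
  have h1 := hy 1
  rw [mem_insert_nbrs_iff] at hw
  simp only [abs_eq_max_neg] at *
  fin_cases i <;> simp only [Fin.zero_eta, Fin.mk_one] <;> omega

end Geometry

section CoupledWalk

lemma map_unifOn {γ δ : Type*} [Inhabited γ] [Inhabited δ] [DecidableEq δ] {s : Finset γ}
    (hs : s.Nonempty) {g : γ → δ} (hg : Set.InjOn g s) :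
    (unifOn s).map g = unifOn (s.image g) := by
  rw [unifOn, dif_pos hs, unifOn, dif_pos (hs.image g)]
  ext b
  rw [PMF.map_apply, PMF.uniformOfFinset_apply, Finset.card_image_of_injOn hg]
  by_cases hb : b ∈ s.image g
  · obtain ⟨a, ha, rfl⟩ := Finset.mem_image.1 hb
    rw [tsum_eq_single a fun a' ha' => ?_, if_pos rfl, if_pos hb,
      PMF.uniformOfFinset_apply_of_mem hs ha]
    by_cases ha's : a' ∈ s
    · exact if_neg fun h => ha' (hg ha's ha h.symm)
    · simp [ha's]
  · rw [if_neg hb]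
    refine ENNReal.tsum_eq_zero.2 fun a => ?_
    split_ifs with h
    · exact PMF.uniformOfFinset_apply_of_notMem _
        fun ha => hb (Finset.mem_image.2 ⟨a, ha, h.symm⟩)
    · rfl

lemma mem_support_unifOn {γ : Type*} [Inhabited γ] {s : Finset γ} (hs : s.Nonempty) {a : γ} :
    a ∈ (unifOn s).support ↔ a ∈ s := by
  rw [unifOn, dif_pos hs, PMF.mem_support_uniformOfFinset_iff]

lemma avoids_mapDomain_iff {d d' : ℕ} {n : ℕ} (f : Site d → Site d') (c : Config d) :
    avoids n (Finsupp.mapDomain f c) ↔ ∀ q ∈ c.support, ¬ onBdry n (f q) := by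
  classical
  simp only [avoids, ← Finsupp.notMem_support_iff,
    Finsupp.mapDomain_support_of_subsingletonAddUnits, Finset.mem_image]
  exact ⟨fun h q hq hbd => h _ hbd ⟨q, hq, rfl⟩,
    fun h z hbd ⟨q, hq, hqz⟩ => h q hq (hqz ▸ hbd)⟩

/-- The coupled walk is a branching random walk on `ℤ⁴ = ℤ² × ℤ²`, so that `pathLaw` applies
to it. -/
def pairSite (x y : Site 2) : Site 4 := Fin.append x y

def fstSite (z : Site 4) : Site 2 := fun i => z (Fin.castAdd 2 i)

def sndSite (z : Site 4) : Site 2 := fun i => z (Fin.natAdd 2 i)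

@[simp] lemma fstSite_pairSite (x y : Site 2) : fstSite (pairSite x y) = x :=
  funext (Fin.append_left x y)

@[simp] lemma sndSite_pairSite (x y : Site 2) : sndSite (pairSite x y) = y :=
  funext (Fin.append_right x y)

noncomputable def coupledNbhd (z : Site 4) : PMF (Site 4) :=
  (unifOn (insert (fstSite z) (nbrs (fstSite z)))).map
    fun w => pairSite w (childMatch (fstSite z) (sndSite z) w)

noncomputable def coupledStep (P : PMF ℕ) : Config 4 → PMF (Config 4) :=
  stepOf fun z => offspringLaw P (coupledNbhd z)

lemma map_fstSite_coupledStep (P : PMF ℕ) (η : Config 4) :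
    (coupledStep P η).map (Finsupp.mapDomain fstSite)
      = aperiodicStep P (Finsupp.mapDomain fstSite η) := by
  refine map_stepOf _ _ fstSite (fun z => ?_) η
  rw [map_offspringLaw, coupledNbhd, PMF.map_comp, aperiodicChild, childLaw_eq_offspringLaw]
  congr 1
  convert PMF.map_id _
  exact funext fun w => fstSite_pairSite _ _

lemma map_sndSite_coupledStep (P : PMF ℕ) (η : Config 4) :
    (coupledStep P η).map (Finsupp.mapDomain sndSite)
      = aperiodicStep P (Finsupp.mapDomain sndSite η) := by
  refine map_stepOf _ _ sndSite (fun z => ?_) η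
  rw [map_offspringLaw, coupledNbhd, PMF.map_comp, aperiodicChild, childLaw_eq_offspringLaw]
  have hmatch : sndSite ∘ (fun w => pairSite w (childMatch (fstSite z) (sndSite z) w))
      = childMatch (fstSite z) (sndSite z) := funext fun w => sndSite_pairSite _ _
  rw [hmatch, map_unifOn ⟨_, Finset.mem_insert_self _ _⟩ (injOn_childMatch _ _),
    image_childMatch]

lemma exists_parent_of_mem_support_coupledStep {P : PMF ℕ} {η c : Config 4}
    (hc : c ∈ (coupledStep P η).support) {q : Site 4} (hq : q ∈ c.support) :
    ∃ p ∈ η.support, ∃ w ∈ insert (fstSite p) (nbrs (fstSite p)),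
      q = pairSite w (childMatch (fstSite p) (sndSite p) w) := by
  let S : Set (Site 4) := ⋃ p ∈ η.support, (coupledNbhd p).support
  have hS : ∀ p ∈ η.support, (coupledNbhd p).support ⊆ S :=
    fun p hp => Set.subset_biUnion_of_mem (u := fun p => (coupledNbhd p).support) hp
  have hsub := support_stepOf_subset _ (Finsupp.supported ℕ ℕ S).toAddSubmonoid
    (fun p hp => (support_offspringLaw_subset P _).trans (Finsupp.supported_mono (hS p hp))) hc
  have hqS : q ∈ S := (Finsupp.mem_supported ℕ c).1 hsub hq
  simp only [S, Set.mem_iUnion, coupledNbhd, PMF.support_map] at hqS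
  obtain ⟨p, hp, w, hw, rfl⟩ := hqS
  exact ⟨p, hp, w, (mem_support_unifOn ⟨_, Finset.mem_insert_self _ _⟩).1 hw, rfl⟩

end CoupledWalk

section Hitting

lemma inInterior_of_abs_le {d n : ℕ} {z : Site d} (hle : ∀ i, |z i| ≤ n)
    (hz : ¬ onBdry n z) :
    inInterior n z := fun i =>
  (hle i).lt_of_ne fun heq => hz ⟨hle, i, heq⟩

lemma not_onBdry_of_inInterior {d n : ℕ} {z : Site d} (hz : inInterior n z) : ¬ onBdry n z :=
  fun ⟨_, i, heq⟩ => (hz i).ne heq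

noncomputable def coupledInit : Config 4 := Finsupp.single (pairSite ![0, 0] ![1, 0]) 1

lemma mapDomain_fstSite_coupledInit :
    Finsupp.mapDomain fstSite coupledInit = Finsupp.single ![0, 0] 1 := by
  rw [coupledInit, Finsupp.mapDomain_single, fstSite_pairSite]

lemma mapDomain_sndSite_coupledInit :
    Finsupp.mapDomain sndSite coupledInit = Finsupp.single ![1, 0] 1 := by
  rw [coupledInit, Finsupp.mapDomain_single, sndSite_pairSite]

lemma mem_support_coupledInit {q : Site 4} :
    q ∈ coupledInit.support ↔ q = pairSite ![0, 0] ![1, 0] := by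
  rw [coupledInit, Finsupp.support_single _ one_ne_zero, Finset.mem_singleton]

variable {P : PMF ℕ} {Z : ℕ → Config 4} (hZ0 : Z 0 = coupledInit)
  (hZ : ∀ t, Z (t + 1) ∈ (coupledStep P (Z t)).support)
include hZ0 hZ

lemma dominated_of_mem_support (t : ℕ) {q : Site 4} (hq : q ∈ (Z t).support) :
    Dominated (fstSite q) (sndSite q) := by
  induction t generalizing q with
  | zero =>
    rw [hZ0, mem_support_coupledInit] at hq
    subst hq
    simp [Dominated]
  | succ t ih =>
    obtain ⟨p, hp, w, hw, rfl⟩ := exists_parent_of_mem_support_coupledStep (hZ t) hq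
    simpa using dominated_childMatch (ih hp) hw

/-- Steps have length at most one, so the walk cannot jump over `∂Λ_n`. -/
lemma inInterior_of_forall_avoids {n : ℕ} (hn : 1 ≤ n) (t : ℕ)
    (havoid : ∀ s ≤ t, avoids n (Finsupp.mapDomain sndSite (Z s))) {q : Site 4}
    (hq : q ∈ (Z t).support) : inInterior n (sndSite q) := by
  have hnot := (avoids_mapDomain_iff _ _).1 (havoid t le_rfl) q hq
  induction t generalizing q with
  | zero =>
    rw [hZ0, mem_support_coupledInit] at hq
    subst hq
    refine inInterior_of_abs_le (fun i => ?_) hnot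
    fin_cases i <;> simp [hn]
  | succ t ih =>
    obtain ⟨p, hp, w, hw, rfl⟩ := exists_parent_of_mem_support_coupledStep (hZ t) hq
    have hparent := ih (fun s hs => havoid s (hs.trans t.le_succ)) hp
      ((avoids_mapDomain_iff _ _).1 (havoid t t.le_succ) p hp)
    simp only [sndSite_pairSite] at hnot ⊢
    exact inInterior_of_abs_le (abs_le_of_mem_insert_nbrs hparent (childMatch_mem hw)) hnot

theorem hitTime_sndSite_le_fstSite {n : ℕ} (hn : 1 ≤ n) :
    hitTime n (fun t => Finsupp.mapDomain sndSite (Z t))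
      ≤ hitTime n (fun t => Finsupp.mapDomain fstSite (Z t)) := by
  refine le_of_forall_lt fun c hc => ?_
  lift c to ℕ using hc.ne_top
  rw [lt_hitTime_iff] at hc ⊢
  refine fun s hs => (avoids_mapDomain_iff _ _).2 fun q hq => not_onBdry_of_inInterior ?_
  exact (dominated_of_mem_support hZ0 hZ s hq).inInterior
    (inInterior_of_forall_avoids hZ0 hZ hn s (fun s' hs' => hc s' (hs'.trans hs)) hq)

end Hitting

/-- For every `n ≥ 1` there is a coupling of the aperiodic nearest-neighbors
branching random walks on `ℤ²` started at `(0,0)` and at `(1,0)` such that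
`τ_n^{(1,0)} ≤ τ_n^{(0,0)}` almost surely; in particular `τ_n^{(1,0)} ≤_st τ_n^{(0,0)}`, i.e.
`ℙ(τ_n^{(1,0)} > t) ≤ ℙ(τ_n^{(0,0)} > t)` for all `t`. -/
theorem aperiodic_coupled_hittingTimes (P : PMF ℕ) (n : ℕ) (hn : 1 ≤ n) :
    (∃ (Ω : Type) (_ : MeasurableSpace Ω) (Pr : Measure Ω) (_ : IsProbabilityMeasure Pr)
      (X0 X1 : ℕ → Ω → Config 2),
      HasPathLaw Pr (aperiodicStep P) (Finsupp.single ![0, 0] 1) X0 ∧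
      HasPathLaw Pr (aperiodicStep P) (Finsupp.single ![1, 0] 1) X1 ∧
      ∀ᵐ ω ∂Pr, hitTime n (fun t => X1 t ω) ≤ hitTime n (fun t => X0 t ω)) ∧
    (∀ t : ℕ, survProb (aperiodicStep P) (Finsupp.single ![1, 0] 1) n t
      ≤ survProb (aperiodicStep P) (Finsupp.single ![0, 0] 1) n t) := by
  have hZ := hasPathLaw_sampleChain (coupledStep P) coupledInit
  have hX0 := mapDomain_fstSite_coupledInit ▸ hZ.mapDomain fstSite (map_fstSite_coupledStep P)
  have hX1 := mapDomain_sndSite_coupledInit ▸ hZ.mapDomain sndSite (map_sndSite_coupledStep P)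
  have hle := hZ.ae_succ_mem_support.mono fun x hx => hitTime_sndSite_le_fstSite hx.1 hx.2 hn
  exact ⟨⟨ℝ, _, _, inferInstance, _, _, hX0, hX1, hle⟩,
    survProb_le_of_ae_hitTime_le hX1 hX0 hle⟩

end BRW
end
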